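/- Let a > 0 and let f : (0,∞) → ℂ be differentiable, and suppose that the four functions f, r ↦ f(r) r^{a}, r ↦ r f'(r), and r ↦ r f'(r) r^{a} all lie in L²((0,∞), dr/r). Then the Mellin transform z ↦ mellin f z is holomorphic on the open strip {z : 0 < Re z < a}, and for every c with 0 < Re c < a one has mellin (r ↦ r f'(r)) c = -c · (mellin f c), all Mellin integrals converging absolutely. -/

import Mathlib

/-!
By AM-GM, `2 r^(σ-1) |f r| ≤ |f r|² r^(2β-1) + r^(2(σ-β)-1)`; taking `β = 0` on `(0, 1]` and
`β = a` on `(1, ∞)` shows that the Mellin integrals of `f` and of `r f'` converge absolutely for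
`0 < Re s < a`. Since `δ |log r| ≤ r^δ + r^(-δ)`, the `s`-derivative of the integrand is dominated
by integrands at nearby real abscissas, so the transform is holomorphic. Finally
`(r^c f)' = c r^(c-1) f + r^(c-1) (r f')` is integrable on `(0, ∞)`, and so is `r^(c-1) f`;
after the substitution `r = exp x` this says that `x ↦ exp (c x) f (exp x)` and its derivative
are integrable on `ℝ`, hence the derivative integrates to `0`.
-/

open MeasureTheory Set Filter Topology Real

namespace Real

lemma two_mul_rpow_sub_one_mul_le {t : ℝ} (ht : 0 < t) (x β σ : ℝ) :
    2 * (t ^ (σ - 1) * x) ≤ x ^ 2 * t ^ (2 * β - 1) + t ^ (2 * (σ - β) - 1) := by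
  have key := two_mul_le_add_sq (x * t ^ (β - 1 / 2)) (t ^ (σ - β - 1 / 2))
  have e1 : x * t ^ (β - 1 / 2) * t ^ (σ - β - 1 / 2) = t ^ (σ - 1) * x := by
    rw [mul_assoc, ← rpow_add ht]; ring_nf
  have e2 : (x * t ^ (β - 1 / 2)) ^ 2 = x ^ 2 * t ^ (2 * β - 1) := by
    rw [mul_pow, ← rpow_mul_natCast ht.le]; ring_nf
  have e3 : (t ^ (σ - β - 1 / 2)) ^ 2 = t ^ (2 * (σ - β) - 1) := by
    rw [← rpow_mul_natCast ht.le]; ring_nf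
  rwa [mul_assoc, e1, e2, e3] at key

lemma rpow_le_rpow_add_rpow {t y p q : ℝ} (ht : 0 < t) (hp : p ≤ y) (hq : y ≤ q) :
    t ^ y ≤ t ^ p + t ^ q := by
  rcases le_total t 1 with ht1 | ht1
  · exact le_add_of_le_of_nonneg (rpow_le_rpow_of_exponent_ge ht ht1 hp) (by positivity)
  · exact le_add_of_nonneg_of_le (by positivity) (rpow_le_rpow_of_exponent_le ht1 hq)

lemma mul_abs_log_le_rpow_add_rpow_neg {t δ : ℝ} (ht : 0 < t) (hδ : 0 < δ) :
    δ * |log t| ≤ t ^ δ + t ^ (-δ) := by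
  rcases le_total 0 (log t) with hlog | hlog
  · have := log_le_rpow_div ht.le hδ
    rw [le_div_iff₀ hδ] at this
    rw [abs_of_nonneg hlog]
    nlinarith [rpow_nonneg ht.le (-δ)]
  · have := log_le_rpow_div (inv_nonneg.2 ht.le) hδ
    rw [log_inv, inv_rpow ht.le, ← rpow_neg ht.le, le_div_iff₀ hδ] at this
    rw [abs_of_nonpos hlog]
    nlinarith [rpow_nonneg ht.le δ]

lemma abs_log_mul_rpow_le {t δ x σ : ℝ} (ht : 0 < t) (hδ : 0 < δ) (hx : |x - σ| ≤ δ) :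
    |log t| * t ^ (x - 1) ≤ 2 / δ * (t ^ (σ - 2 * δ - 1) + t ^ (σ + 2 * δ - 1)) := by
  obtain ⟨hx₁, hx₂⟩ := abs_le.1 hx
  have hsplit : (t ^ δ + t ^ (-δ)) * t ^ (x - 1) = t ^ (x + δ - 1) + t ^ (x - δ - 1) := by
    rw [add_mul, ← rpow_add ht, ← rpow_add ht]; ring_nf
  have hlog := mul_abs_log_le_rpow_add_rpow_neg ht hδ
  rw [div_mul_eq_mul_div, le_div_iff₀ hδ]
  calc |log t| * t ^ (x - 1) * δ = δ * |log t| * t ^ (x - 1) := by ring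
    _ ≤ (t ^ δ + t ^ (-δ)) * t ^ (x - 1) := by gcongr
    _ = t ^ (x + δ - 1) + t ^ (x - δ - 1) := hsplit
    _ ≤ 2 * (t ^ (σ - 2 * δ - 1) + t ^ (σ + 2 * δ - 1)) := by
      have h_plus := rpow_le_rpow_add_rpow (p := σ - 2 * δ - 1) (q := σ + 2 * δ - 1)
        (y := x + δ - 1) ht (by linarith) (by linarith)
      have h_minus := rpow_le_rpow_add_rpow (p := σ - 2 * δ - 1) (q := σ + 2 * δ - 1)
        (y := x - δ - 1) ht (by linarith) (by linarith)
      linarith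

end Real

lemma integral_Ioi_zero_eq_zero_of_hasDerivAt {E : Type*} [NormedAddCommGroup E]
    [NormedSpace ℝ E] {g g' : ℝ → E} (hg : ∀ r ∈ Ioi (0 : ℝ), HasDerivAt g (g' r) r)
    (hg' : IntegrableOn g' (Ioi 0)) (hg_div : IntegrableOn (fun r => r⁻¹ • g r) (Ioi 0)) :
    ∫ r in Ioi 0, g' r = 0 := by
  have himage : exp '' univ = Ioi 0 := by rw [image_univ, range_exp]
  have hexp : ∀ x ∈ univ, HasDerivWithinAt exp (exp x) univ x :=
    fun x _ => (Real.hasDerivAt_exp x).hasDerivWithinAt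
  rw [← himage, integral_image_eq_integral_abs_deriv_smul MeasurableSet.univ hexp
    exp_injective.injOn, setIntegral_univ]
  rw [← himage, integrableOn_image_iff_integrableOn_abs_deriv_smul MeasurableSet.univ hexp
    exp_injective.injOn, integrableOn_univ] at hg' hg_div
  simp only [abs_of_pos (exp_pos _), smul_inv_smul₀ (exp_pos _).ne'] at hg' hg_div ⊢
  exact integral_eq_zero_of_hasDerivAt_of_integrable
    (fun x => (hg _ (exp_pos x)).scomp x (Real.hasDerivAt_exp x)) hg' hg_div

section Mellin

variable {E : Type*} [NormedAddCommGroup E]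

lemma integrableOn_rpow_sub_one_mul_norm {f : ℝ → E} {S : Set ℝ} (hS : MeasurableSet S)
    (hS₀ : S ⊆ Ioi 0) (hf : AEStronglyMeasurable f (volume.restrict S)) {β σ : ℝ}
    (hfβ : IntegrableOn (fun r => ‖f r‖ ^ 2 * r ^ (2 * β - 1)) S)
    (hσβ : IntegrableOn (fun r : ℝ => r ^ (2 * (σ - β) - 1)) S) :
    IntegrableOn (fun r => r ^ (σ - 1) * ‖f r‖) S := by
  refine ((hfβ.add hσβ).div_const 2).mono'
    ((measurable_id.pow_const _).aestronglyMeasurable.mul hf.norm) ?_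
  filter_upwards [ae_restrict_mem hS] with r hr
  have hr₀ : 0 < r := hS₀ hr
  rw [norm_of_nonneg (by positivity), le_div_iff₀ two_pos, mul_comm]
  exact two_mul_rpow_sub_one_mul_le hr₀ _ _ _

variable [NormedSpace ℂ E]

lemma mellinConvergent_of_integrableOn_sq {f : ℝ → E}
    (hf : AEStronglyMeasurable f (volume.restrict (Ioi 0))) {a b : ℝ}
    (hb : IntegrableOn (fun r => ‖f r‖ ^ 2 * r ^ (2 * b - 1)) (Ioi 0))
    (ha : IntegrableOn (fun r => ‖f r‖ ^ 2 * r ^ (2 * a - 1)) (Ioi 0))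
    {s : ℂ} (hbs : b < s.re) (hsa : s.re < a) : MellinConvergent f s := by
  rw [MellinConvergent, mellin_convergent_iff_norm le_rfl measurableSet_Ioi hf,
    ← Ioc_union_Ioi_eq_Ioi zero_le_one]
  refine IntegrableOn.union ?_ ?_
  · refine integrableOn_rpow_sub_one_mul_norm measurableSet_Ioc Ioc_subset_Ioi_self
      (hf.mono_set Ioc_subset_Ioi_self) (hb.mono_set Ioc_subset_Ioi_self) ?_
    rw [integrableOn_Ioc_iff_integrableOn_Ioo, intervalIntegral.integrableOn_Ioo_rpow_iff one_pos]
    linarith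
  · refine integrableOn_rpow_sub_one_mul_norm measurableSet_Ioi (Ioi_subset_Ioi zero_le_one)
      (hf.mono_set (Ioi_subset_Ioi zero_le_one)) (ha.mono_set (Ioi_subset_Ioi zero_le_one)) ?_
    rw [integrableOn_Ioi_rpow_iff one_pos]
    linarith

lemma mellin_differentiableAt_of_eventually_mellinConvergent {f : ℝ → E}
    (hf : AEStronglyMeasurable f (volume.restrict (Ioi 0))) {z : ℂ}
    (hz : ∀ᶠ s in 𝓝 z, MellinConvergent f s) : DifferentiableAt ℂ (mellin f) z := by
  obtain ⟨ε, hε, hball⟩ := Metric.eventually_nhds_iff.1 hz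
  obtain ⟨δ, hδ, hδε⟩ : ∃ δ : ℝ, 0 < δ ∧ 2 * δ < ε := ⟨ε / 4, by positivity, by linarith⟩
  have hconv : ∀ σ : ℝ, |σ - z.re| ≤ 2 * δ →
      IntegrableOn (fun t : ℝ => t ^ (σ - 1) * ‖f t‖) (Ioi 0) := by
    intro σ hσ
    have := hball (y := z + (σ - z.re : ℝ)) (by
      rw [dist_eq_norm, add_sub_cancel_left, Complex.norm_real, norm_eq_abs]; linarith)
    rwa [MellinConvergent, mellin_convergent_iff_norm le_rfl measurableSet_Ioi hf,
      Complex.add_re, Complex.ofReal_re, add_sub_cancel] at this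
  set F : ℂ → ℝ → E := fun s t => (t : ℂ) ^ (s - 1) • f t
  set F' : ℂ → ℝ → E := fun s t => ((t : ℂ) ^ (s - 1) * log t) • f t
  have hF_meas : ∀ s, AEStronglyMeasurable (F s) (volume.restrict (Ioi 0)) := fun s =>
    ((continuousOn_of_forall_continuousAt fun t ht =>
      Complex.continuousAt_ofReal_cpow_const _ _ (Or.inr (ne_of_gt ht))).aestronglyMeasurable
      measurableSet_Ioi).smul hf
  have hF'_meas : AEStronglyMeasurable (F' z) (volume.restrict (Ioi 0)) := by
    have hlog : AEStronglyMeasurable (fun t : ℝ => ((log t : ℝ) : ℂ))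
        (volume.restrict (Ioi 0)) :=
      (Complex.measurable_ofReal.comp measurable_log).aestronglyMeasurable
    have := hlog.smul (hF_meas z)
    refine this.congr (Eventually.of_forall fun t => ?_)
    change (log t : ℂ) • ((t : ℂ) ^ (z - 1) • f t) = _
    rw [smul_smul, mul_comm]
  have hF'_le : ∀ᵐ t ∂(volume.restrict (Ioi 0)), ∀ s ∈ Metric.ball z δ,
      ‖F' s t‖ ≤ 2 / δ * (t ^ (z.re - 2 * δ - 1) * ‖f t‖ + t ^ (z.re + 2 * δ - 1) * ‖f t‖) := by
    filter_upwards [ae_restrict_mem measurableSet_Ioi] with t (ht : 0 < t) s hs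
    have hre : |s.re - z.re| ≤ δ := by
      rw [← Complex.sub_re]
      exact (Complex.abs_re_le_norm _).trans (le_of_lt (by simpa [dist_eq_norm] using hs))
    have := abs_log_mul_rpow_le ht hδ hre
    simp only [F', norm_smul, norm_mul, Complex.norm_cpow_eq_rpow_re_of_pos ht, Complex.sub_re,
      Complex.one_re, Complex.norm_real, norm_eq_abs]
    calc t ^ (s.re - 1) * |log t| * ‖f t‖ = (|log t| * t ^ (s.re - 1)) * ‖f t‖ := by ring
      _ ≤ 2 / δ * (t ^ (z.re - 2 * δ - 1) + t ^ (z.re + 2 * δ - 1)) * ‖f t‖ := by gcongr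
      _ = _ := by ring
  have hF_deriv : ∀ᵐ t ∂(volume.restrict (Ioi 0)), ∀ s ∈ Metric.ball z δ,
      HasDerivAt (fun s => F s t) (F' s t) s := by
    filter_upwards [ae_restrict_mem measurableSet_Ioi] with t (ht : 0 < t) s _
    have ht' : (t : ℂ) ≠ 0 := Complex.ofReal_ne_zero.2 ht.ne'
    have hcpow : HasDerivAt (fun s : ℂ => (t : ℂ) ^ (s - 1)) ((t : ℂ) ^ (s - 1) * log t) s := by
      convert ((hasDerivAt_id' s).sub_const 1).const_cpow (Or.inl ht') using 1
      rw [Complex.ofReal_log ht.le]; ring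
    exact hcpow.smul_const (f t)
  have hbound := ((hconv (z.re - 2 * δ) (by rw [abs_le]; constructor <;> linarith)).add
    (hconv (z.re + 2 * δ) (by rw [abs_le]; constructor <;> linarith))).const_mul (2 / δ)
  exact (hasDerivAt_integral_of_dominated_loc_of_deriv_le (Metric.ball_mem_nhds z hδ)
    (Eventually.of_forall hF_meas) (hball (Metric.mem_ball_self hε)) hF'_meas hF'_le
    hbound hF_deriv).2.differentiableAt

lemma mellin_ofReal_smul_deriv {f f' : ℝ → E} (hf : ∀ r ∈ Ioi (0 : ℝ), HasDerivAt f (f' r) r)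
    {c : ℂ} (hfc : MellinConvergent f c) (hf'c : MellinConvergent (fun r => (r : ℂ) • f' r) c) :
    mellin (fun r => (r : ℂ) • f' r) c = -c • mellin f c := by
  have hderiv : ∀ r ∈ Ioi (0 : ℝ), HasDerivAt (fun r : ℝ => (r : ℂ) ^ c • f r)
      (c • ((r : ℂ) ^ (c - 1) • f r) + (r : ℂ) ^ (c - 1) • ((r : ℂ) • f' r)) r := by
    intro r hr
    have hpow : (r : ℂ) ^ (c - 1) * r = (r : ℂ) ^ c := by
      have hr' : (r : ℂ) ≠ 0 := Complex.ofReal_ne_zero.2 (ne_of_gt hr)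
      rw [Complex.cpow_sub _ _ hr', Complex.cpow_one, div_mul_cancel₀ _ hr']
    have hcpow := (Complex.hasStrictDerivAt_cpow_const (c := c)
      (Complex.ofReal_mem_slitPlane.2 hr)).hasDerivAt.comp_ofReal
    refine (hcpow.smul (hf r hr)).congr_deriv ?_
    rw [smul_smul, smul_smul, hpow, add_comm]
  have hcfc : IntegrableOn (fun r : ℝ => c • ((r : ℂ) ^ (c - 1) • f r)) (Ioi 0) := hfc.smul c
  have hzero := integral_Ioi_zero_eq_zero_of_hasDerivAt hderiv (hcfc.add hf'c) ?_
  · rw [integral_add hcfc hf'c, integral_smul] at hzero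
    rw [mellin, mellin, ← sub_eq_zero, neg_smul, sub_neg_eq_add, add_comm]
    exact hzero
  · refine hfc.congr_fun (fun r (hr : 0 < r) => ?_) measurableSet_Ioi
    have hr' : (r : ℂ) ≠ 0 := Complex.ofReal_ne_zero.2 (ne_of_gt hr)
    change (r : ℂ) ^ (c - 1) • f r = _
    rw [RCLike.real_smul_eq_coe_smul (K := ℂ), smul_smul, Complex.cpow_sub _ _ hr',
      Complex.cpow_one, div_eq_inv_mul]
    norm_cast

end Mellin

theorem stmt_8_general (a : ℝ) (f f' : ℝ → ℂ)
    (hdiff : ∀ r ∈ Set.Ioi (0 : ℝ), HasDerivAt f (f' r) r)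
    (h1 : IntegrableOn (fun r => ‖f r‖ ^ 2 / r) (Set.Ioi 0))
    (h2 : IntegrableOn (fun r => ‖f r‖ ^ 2 * r ^ (2 * a - 1)) (Set.Ioi 0))
    (h3 : IntegrableOn (fun (r : ℝ) => ‖(r : ℂ) * f' r‖ ^ 2 / r) (Set.Ioi 0))
    (h4 : IntegrableOn (fun (r : ℝ) => ‖(r : ℂ) * f' r‖ ^ 2 * r ^ (2 * a - 1)) (Set.Ioi 0)) :
    DifferentiableOn ℂ (mellin f) {z : ℂ | 0 < z.re ∧ z.re < a} ∧
      ∀ c : ℂ, 0 < c.re → c.re < a →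
        MellinConvergent f c ∧ MellinConvergent (fun r => (r : ℂ) * f' r) c ∧
          mellin (fun r => (r : ℂ) * f' r) c = -c * mellin f c := by
  have hweight : ∀ g : ℝ → ℂ, IntegrableOn (fun r => ‖g r‖ ^ 2 / r) (Ioi 0) →
      IntegrableOn (fun r => ‖g r‖ ^ 2 * r ^ (2 * (0 : ℝ) - 1)) (Ioi 0) := fun g hg =>
    hg.congr_fun (fun r _ => by dsimp only; rw [mul_zero, zero_sub, rpow_neg_one, div_eq_mul_inv])
      measurableSet_Ioi
  have hf_meas : AEStronglyMeasurable f (volume.restrict (Ioi 0)) :=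
    ContinuousOn.aestronglyMeasurable (fun r hr => (hdiff r hr).continuousAt.continuousWithinAt)
      measurableSet_Ioi
  have hf'_meas : AEStronglyMeasurable (fun r : ℝ => (r : ℂ) * f' r)
      (volume.restrict (Ioi 0)) := by
    refine (Complex.measurable_ofReal.mul (measurable_deriv f)).aestronglyMeasurable.congr ?_
    filter_upwards [ae_restrict_mem measurableSet_Ioi] with r hr
    change (r : ℂ) * deriv f r = _
    rw [(hdiff r hr).deriv]
  have hconv_f : ∀ c : ℂ, 0 < c.re → c.re < a → MellinConvergent f c := fun c =>
    mellinConvergent_of_integrableOn_sq hf_meas (hweight f h1) h2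
  have hconv_f' : ∀ c : ℂ, 0 < c.re → c.re < a →
      MellinConvergent (fun r => (r : ℂ) * f' r) c := fun c =>
    mellinConvergent_of_integrableOn_sq hf'_meas (hweight _ h3) h4
  have hstrip : IsOpen {z : ℂ | 0 < z.re ∧ z.re < a} :=
    (isOpen_lt continuous_const Complex.continuous_re).inter
      (isOpen_lt Complex.continuous_re continuous_const)
  refine ⟨fun z hz => ?_, fun c hc₀ hca =>
    ⟨hconv_f c hc₀ hca, hconv_f' c hc₀ hca,
      mellin_ofReal_smul_deriv hdiff (hconv_f c hc₀ hca) (hconv_f' c hc₀ hca)⟩⟩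
  exact (mellin_differentiableAt_of_eventually_mellinConvergent hf_meas
    (eventually_of_mem (hstrip.mem_nhds hz) fun s hs => hconv_f s hs.1 hs.2)).differentiableWithinAt

/-- Analogue on the strip `0 < Re c < a` with weight `r^a`: if `f`, `f·r^{a}`, `r f'` and
`(r f')·r^{a}` belong to `L²((0,∞), dr/r)`, then the Mellin transform of `f` is holomorphic
on the strip and `mellin (r ↦ r f'(r)) c = -c · mellin f c` there. -/
theorem stmt_8 (a : ℝ) (ha : 0 < a) (f f' : ℝ → ℂ)
    (hdiff : ∀ r ∈ Set.Ioi (0 : ℝ), HasDerivAt f (f' r) r)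
    (h1 : IntegrableOn (fun r => ‖f r‖ ^ 2 / r) (Set.Ioi 0))
    (h2 : IntegrableOn (fun r => ‖f r‖ ^ 2 * r ^ (2 * a - 1)) (Set.Ioi 0))
    (h3 : IntegrableOn (fun (r : ℝ) => ‖(r : ℂ) * f' r‖ ^ 2 / r) (Set.Ioi 0))
    (h4 : IntegrableOn (fun (r : ℝ) => ‖(r : ℂ) * f' r‖ ^ 2 * r ^ (2 * a - 1)) (Set.Ioi 0)) :
    DifferentiableOn ℂ (mellin f) {z : ℂ | 0 < z.re ∧ z.re < a} ∧
      ∀ c : ℂ, 0 < c.re → c.re < a →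
        MellinConvergent f c ∧ MellinConvergent (fun r => (r : ℂ) * f' r) c ∧
          mellin (fun r => (r : ℂ) * f' r) c = -c * mellin f c :=
  stmt_8_general a f f' hdiff h1 h2 h3 h4
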